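/- arXiv:1307.7635 — 5 statements merged into one kernel-verified Lean document; each statement's English description precedes it below -/
import Mathlib

section
/- Let A be an algebra and let N_alt(A) be its generalized alternative nucleus. If a, b ∈ N_alt(A), then the commutator [a,b] = ab − ba also lies in N_alt(A). -/
/-!
Writing `(x,y,z)` for the associator, the Teichmüller identities at `(a,b,x,y)`, `(x,a,b,y)`,
`(a,x,y,b)` and `(x,a,y,b)`, with every associator rewritten so that `a` or `b` stands first,
show that for `a, b ∈ N_alt(A)`
`(ab,x,y) + (x,ab,y) = (a,bx,y) + (b,ax,y) - (a,x,by) - (b,x,ay)`.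
The right-hand side is symmetric in `a` and `b`, so `[a,b]` satisfies the first defining identity
of `N_alt(A)`. The opposite algebra has the same generalized alternative nucleus, reverses
associators and negates commutators, so the second identity follows from the first one there.
-/

/-- The associator `(x,y,z) = (xy)z - x(yz)`. -/
def aassoc {A : Type*} [NonUnitalNonAssocRing A] (x y z : A) : A := (x * y) * z - x * (y * z)

/-- The generalized alternative nucleus
`N_alt(A) = { a | (a,x,y) = -(x,a,y) = (x,y,a) for all x, y }`. -/
def genAltNucleus (A : Type*) [NonUnitalNonAssocRing A] : Set A :=
  {a | ∀ x y : A, aassoc a x y = - aassoc x a y ∧ aassoc x y a = - aassoc x a y}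

open MulOpposite

section

variable {A : Type*} [NonUnitalNonAssocRing A]

theorem aassoc_teichmuller (w x y z : A) :
    aassoc (w * x) y z - aassoc w (x * y) z + aassoc w x (y * z) =
      w * aassoc x y z + aassoc w x y * z := by
  simp only [aassoc, mul_sub, sub_mul]
  abel

theorem aassoc_sub_left (u v x y : A) :
    aassoc (u - v) x y = aassoc u x y - aassoc v x y := by
  simp only [aassoc, sub_mul]
  abel

theorem aassoc_sub_mid (x u v y : A) :
    aassoc x (u - v) y = aassoc x u y - aassoc x v y := by
  simp only [aassoc, mul_sub, sub_mul]
  abel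

theorem aassoc_op (x y z : A) : aassoc (op x) (op y) (op z) = -op (aassoc z y x) := by
  simp only [aassoc, ← op_mul, ← op_sub, ← op_neg, neg_sub]

namespace genAltNucleus

variable {a b : A}

theorem aassoc_mid (ha : a ∈ genAltNucleus A) (x y : A) : aassoc x a y = -aassoc a x y := by
  rw [(ha x y).1, neg_neg]

theorem aassoc_right (ha : a ∈ genAltNucleus A) (x y : A) : aassoc x y a = aassoc a x y := by
  rw [(ha x y).2, (ha x y).1]

theorem op_mem (ha : a ∈ genAltNucleus A) : op a ∈ genAltNucleus Aᵐᵒᵖ := by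
  intro x y
  induction x using MulOpposite.rec'
  induction y using MulOpposite.rec'
  simp only [aassoc_op, neg_neg, neg_eq_iff_eq_neg, ← op_neg, op_inj]
  exact ⟨(ha _ _).2, (ha _ _).1⟩

theorem aassoc_mul_add_aassoc_mul (ha : a ∈ genAltNucleus A) (hb : b ∈ genAltNucleus A)
    (x y : A) :
    aassoc (a * b) x y + aassoc x (a * b) y =
      aassoc a (b * x) y + aassoc b (a * x) y - aassoc a x (b * y) - aassoc b x (a * y) := by
  have t₁ := aassoc_teichmuller a b x y
  have t₂ := aassoc_teichmuller x a b y
  have t₃ := aassoc_teichmuller a x y b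
  have t₄ := aassoc_teichmuller x a y b
  rw [aassoc_mid hb, aassoc_mid ha, aassoc_mid ha x b, aassoc_right hb, aassoc_mid ha b x] at t₂
  rw [aassoc_right hb, aassoc_right hb, aassoc_right hb, aassoc_mid ha b] at t₃
  rw [aassoc_right hb, aassoc_right hb, aassoc_mid ha x, aassoc_right hb, aassoc_mid ha b,
    aassoc_mid ha x y] at t₄
  linear_combination (norm := (simp only [mul_neg, neg_mul]; abel)) t₁ - t₂ - t₃ - t₄

theorem aassoc_commutator_left (ha : a ∈ genAltNucleus A) (hb : b ∈ genAltNucleus A)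
    (x y : A) : aassoc (a * b - b * a) x y = -aassoc x (a * b - b * a) y := by
  rw [aassoc_sub_left, aassoc_sub_mid]
  linear_combination (norm := abel)
    aassoc_mul_add_aassoc_mul ha hb x y - aassoc_mul_add_aassoc_mul hb ha x y

end genAltNucleus

end

/-- The generalized alternative nucleus is closed under the commutator `[a,b] = ab - ba`. -/
theorem comm_mem_genAltNucleus {A : Type*} [NonUnitalNonAssocRing A] (a b : A)
    (ha : a ∈ genAltNucleus A) (hb : b ∈ genAltNucleus A) :
    a * b - b * a ∈ genAltNucleus A := by
  refine fun x y => ⟨genAltNucleus.aassoc_commutator_left ha hb x y, ?_⟩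
  have h := genAltNucleus.aassoc_commutator_left (genAltNucleus.op_mem hb)
    (genAltNucleus.op_mem ha) (op y) (op x)
  rwa [← op_mul, ← op_mul, ← op_sub, aassoc_op, aassoc_op, neg_neg, neg_eq_iff_eq_neg,
    ← op_neg, op_inj] at h
end

section
/- Let G be a group, ℚ[G] its rational group algebra and Δ its augmentation ideal. For every i ≥ 1, if g belongs to the i-th term γ_i G of the lower central series of G, then g − 1 ∈ Δ^i. That is, γ_i G ⊆ D_i G. -/
/-!
The sets `D_n = {g | g - 1 ∈ Δ ^ n}` are subgroups, being kernels of
`G → ℚ[G] ⧸ Δ ^ n`. The identity `[x, y] - 1 = ((x - 1)(y - 1) - (y - 1)(x - 1)) x⁻¹ y⁻¹`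
gives `[D_m, D_n] ⊆ D_(m + n)`, so by induction from `D_1 = G` we get `γ_i G ⊆ D_i`.
-/

/-- The augmentation map `ℚ[G] → ℚ`, sending each `g ∈ G` to `1`. -/
noncomputable def augMap (G : Type*) [Group G] : MonoidAlgebra ℚ G →ₐ[ℚ] ℚ :=
  MonoidAlgebra.lift ℚ ℚ G 1

/-- The augmentation ideal `Δ ⊆ ℚ[G]`. -/
noncomputable def augIdeal (G : Type*) [Group G] : Ideal (MonoidAlgebra ℚ G) :=
  RingHom.ker (augMap G)

namespace Ideal

variable {G R : Type*} [Group G] [Ring R]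

/-- For `J = Δ ^ n` and `φ = MonoidAlgebra.of ℚ G` this is the dimension subgroup `D_n G`. -/
def dimensionSubgroup (J : Ideal R) [J.IsTwoSided] (φ : G →* R) : Subgroup G :=
  ((Quotient.mk J : R →* R ⧸ J).comp φ).ker

theorem mem_dimensionSubgroup {J : Ideal R} [J.IsTwoSided] {φ : G →* R} {g : G} :
    g ∈ J.dimensionSubgroup φ ↔ φ g - 1 ∈ J := by
  rw [dimensionSubgroup, MonoidHom.mem_ker, MonoidHom.comp_apply, ← map_one (Quotient.mk J)]
  exact Quotient.eq

open scoped commutatorElement in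
theorem map_commutatorElement_sub_one_mem_pow_add {I : Ideal R} [I.IsTwoSided] {φ : G →* R}
    {m n : ℕ} {x y : G} (hx : φ x - 1 ∈ I ^ m) (hy : φ y - 1 ∈ I ^ n) :
    φ ⁅x, y⁆ - 1 ∈ I ^ (m + n) := by
  have hφx : φ x * φ x⁻¹ = 1 := by rw [← map_mul, mul_inv_cancel, map_one]
  have hφy : φ y * φ y⁻¹ = 1 := by rw [← map_mul, mul_inv_cancel, map_one]
  have hcomm : φ x * φ y - φ y * φ x = (φ x - 1) * (φ y - 1) - (φ y - 1) * (φ x - 1) := by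
    noncomm_ring
  have hcommutator : φ ⁅x, y⁆ - 1 = (φ x * φ y - φ y * φ x) * (φ x⁻¹ * φ y⁻¹) := by
    rw [commutatorElement_def, map_mul, map_mul, map_mul, sub_mul]
    simp only [mul_assoc, ← mul_assoc (φ x) (φ x⁻¹), hφx, one_mul, hφy]
  rw [hcommutator, hcomm]
  refine mul_mem_right _ _ (sub_mem ?_ ?_)
  · rw [IsTwoSided.pow_add]
    exact mul_mem_mul hx hy
  · rw [add_comm, IsTwoSided.pow_add]
    exact mul_mem_mul hy hx

theorem lowerCentralSeries_le_dimensionSubgroup_pow {I : Ideal R} [I.IsTwoSided] {φ : G →* R}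
    {S : Subgroup G} (hS : ∀ g ∈ S, φ g - 1 ∈ I) (n : ℕ) :
    S.lowerCentralSeries n ≤ (I ^ (n + 1)).dimensionSubgroup φ := by
  induction n with
  | zero => exact fun g hg => mem_dimensionSubgroup.2 (by rw [Submodule.pow_one]; exact hS g hg)
  | succ n ih =>
    rw [Subgroup.lowerCentralSeries_succ, Subgroup.commutator_le]
    intro x hx y hy
    exact mem_dimensionSubgroup.2 <|
      map_commutatorElement_sub_one_mem_pow_add (mem_dimensionSubgroup.1 (ih hx))
        (by rw [Submodule.pow_one]; exact hS y hy)

end Ideal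

instance (G : Type*) [Group G] : (augIdeal G).IsTwoSided :=
  inferInstanceAs (RingHom.ker (augMap G)).IsTwoSided

theorem of_sub_one_mem_augIdeal {G : Type*} [Group G] (g : G) :
    MonoidAlgebra.of ℚ G g - 1 ∈ augIdeal G := by
  simp [augIdeal, augMap]

-- Mathlib's lower central series starts with `⊤` at index `0`, so `γ_i G` is the term `i - 1`.
/-- `γ_i G ⊆ D_i G`: if `g` lies in the `i`-th term of the lower central series, then
`g - 1 ∈ Δ^i`.  (Here `γ_i G` is `lowerCentralSeries G (i - 1)` since Mathlib's lower
central series starts at `⊤` at index 0.) -/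
theorem lowerCentralSeries_le_dimensionSubgroup (G : Type*) [Group G] (i : ℕ) (hi : 1 ≤ i)
    (g : G) (hg : g ∈ (⊤ : Subgroup G).lowerCentralSeries (i - 1)) :
    MonoidAlgebra.of ℚ G g - 1 ∈ augIdeal G ^ i := by
  obtain ⟨n, rfl⟩ := Nat.exists_eq_add_of_le' hi
  exact Ideal.mem_dimensionSubgroup.1 <|
    Ideal.lowerCentralSeries_le_dimensionSubgroup_pow (fun g _ => of_sub_one_mem_augIdeal g) n hg
end

section
/- Let G be a group, ℚ[G] its rational group algebra and Δ its augmentation ideal. If g, h ∈ G satisfy g − 1 ∈ Δ^i and h − 1 ∈ Δ^j, then the group commutator [g,h] = g⁻¹h⁻¹gh satisfies [g,h] − 1 ∈ Δ^{i+j}. In particular, [D_iG, D_jG] ⊆ D_{i+j}G, so the group commutator induces a well-defined bracket on the graded abelian group ⊕_{i>0} D_iG/D_{i+1}G. -/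
theorem Ideal.mul_sub_mul_mem_pow_add {A : Type*} [Ring A] {I : Ideal A} [I.IsTwoSided]
    {i j : ℕ} {a b : A} (ha : a - 1 ∈ I ^ i) (hb : b - 1 ∈ I ^ j) :
    a * b - b * a ∈ I ^ (i + j) := by
  have hab := Ideal.mul_mem_mul ha hb
  have hba := Ideal.mul_mem_mul hb ha
  rw [← Ideal.IsTwoSided.pow_add] at hab hba
  rw [add_comm] at hba
  convert sub_mem hab hba using 1
  noncomm_ring

theorem Ideal.map_commutator_sub_one_mem_pow_add {A G : Type*} [Ring A] [Group G] (f : G →* A)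
    {I : Ideal A} [I.IsTwoSided] {i j : ℕ} {g h : G} (hg : f g - 1 ∈ I ^ i)
    (hh : f h - 1 ∈ I ^ j) : f (g⁻¹ * h⁻¹ * g * h) - 1 ∈ I ^ (i + j) := by
  have hinv : f (g⁻¹ * h⁻¹) * (f h * f g) = 1 := by
    rw [← map_mul, ← map_mul, ← map_one f]
    congr 1
    group
  have := (I ^ (i + j)).mul_mem_left (f (g⁻¹ * h⁻¹)) (Ideal.mul_sub_mul_mem_pow_add hg hh)
  rwa [mul_sub, hinv, ← map_mul, ← map_mul, ← mul_assoc] at this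

/-- If `g - 1 ∈ Δ^i` and `h - 1 ∈ Δ^j`, then the group commutator
`[g,h] = g⁻¹h⁻¹gh` satisfies `[g,h] - 1 ∈ Δ^{i+j}`; in particular
`[D_i G, D_j G] ⊆ D_{i+j} G`. -/
theorem commutator_dimension_subgroup (G : Type*) [Group G] (i j : ℕ) (g h : G)
    (hg : MonoidAlgebra.of ℚ G g - 1 ∈ augIdeal G ^ i)
    (hh : MonoidAlgebra.of ℚ G h - 1 ∈ augIdeal G ^ j) :
    MonoidAlgebra.of ℚ G (g⁻¹ * h⁻¹ * g * h) - 1 ∈ augIdeal G ^ (i + j) :=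
  Ideal.map_commutator_sub_one_mem_pow_add _ hg hh
end

section
/- Let (G, σ, ρ) be a group with triality and M(G) = { P(g) | g ∈ G }. Then M(G) is closed under the product x * y = ρ(x)⁻¹ · y · ρ²(x)⁻¹: for all x, y ∈ M(G), ρ(x)⁻¹ y ρ²(x)⁻¹ ∈ M(G). -/
/-- `P(g) = g·σ(g)⁻¹`. -/
def trialityP {G : Type*} [Group G] (σ : G →* G) (g : G) : G := g * (σ g)⁻¹

/-- `M(G) = { P(g) | g ∈ G }`. -/
def trialityM {G : Type*} [Group G] (σ : G →* G) : Set G := Set.range (trialityP σ)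

/-- The Moufang product `x * y = ρ(x)⁻¹ · y · ρ²(x)⁻¹` on `M(G)`. -/
def trialityMul {G : Type*} [Group G] (ρ : G →* G) (x y : G) : G :=
  (ρ x)⁻¹ * y * (ρ (ρ x))⁻¹

/-!
`M(G)` is the orbit of `1` under the twisted conjugation `a • y = a y σ(a)⁻¹`, so it is stable
under it. Since `σ` inverts every `x ∈ M(G)`, the relation `σρσ = ρ²` gives
`σ(ρ(x)) = ρ²(x)⁻¹`; hence `x * y` is the twisted conjugate of `y` by `ρ(x)⁻¹`.
-/

section Triality

variable {G : Type*} [Group G] (σ : G →* G)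

theorem trialityP_mul (a g : G) : trialityP σ (a * g) = a * trialityP σ g * (σ a)⁻¹ := by
  simp only [trialityP, map_mul, mul_inv_rev, mul_assoc]

theorem mul_mul_inv_map_mem_trialityM {y : G} (hy : y ∈ trialityM σ) (a : G) :
    a * y * (σ a)⁻¹ ∈ trialityM σ := by
  obtain ⟨g, rfl⟩ := hy
  exact ⟨a * g, trialityP_mul σ a g⟩

variable {σ}

theorem map_eq_inv_of_mem_trialityM (hσ : ∀ g, σ (σ g) = g) {x : G} (hx : x ∈ trialityM σ) :
    σ x = x⁻¹ := by
  obtain ⟨g, rfl⟩ := hx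
  simp only [trialityP, map_mul, map_inv, hσ, mul_inv_rev, inv_inv]

theorem map_map_eq_inv_of_map_eq_inv {ρ : G →* G} (hσρ : ∀ g, σ (ρ (σ g)) = ρ (ρ g)) {x : G}
    (hx : σ x = x⁻¹) : σ (ρ x) = (ρ (ρ x))⁻¹ := by
  simpa only [map_inv, hx, inv_inv] using hσρ x⁻¹

end Triality

theorem trialityM_mul_closed_general {G : Type*} [Group G] (σ ρ : G →* G)
    (hσ : ∀ g, σ (σ g) = g)
    (hσρ : ∀ g, σ (ρ (σ g)) = ρ (ρ g)) :
    ∀ x ∈ trialityM σ, ∀ y ∈ trialityM σ, trialityMul ρ x y ∈ trialityM σ := by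
  intro x hx y hy
  have hρx : σ (ρ x) = (ρ (ρ x))⁻¹ :=
    map_map_eq_inv_of_map_eq_inv hσρ (map_eq_inv_of_mem_trialityM hσ hx)
  have := mul_mul_inv_map_mem_trialityM σ hy (ρ x)⁻¹
  rwa [map_inv, inv_inv, hρx] at this

/-- In a group with triality `(G, σ, ρ)`, the set `M(G)` is closed under the product
`x * y = ρ(x)⁻¹ y ρ²(x)⁻¹`. -/
theorem trialityM_mul_closed {G : Type*} [Group G] (σ ρ : G →* G)
    (hσ : ∀ g, σ (σ g) = g) (hρ : ∀ g, ρ (ρ (ρ g)) = g)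
    (hσρ : ∀ g, σ (ρ (σ g)) = ρ (ρ g))
    (htri : ∀ g, trialityP σ g * ρ (trialityP σ g) * ρ (ρ (trialityP σ g)) = 1) :
    ∀ x ∈ trialityM σ, ∀ y ∈ trialityM σ, trialityMul ρ x y ∈ trialityM σ :=
  trialityM_mul_closed_general σ ρ hσ hσρ
end

section
/- Let (G, σ, ρ) be a group with triality and M(G) = { P(g) | g ∈ G } with product x * y = ρ(x)⁻¹ · y · ρ²(x)⁻¹. Then for every x ∈ M(G) the group inverse x⁻¹ also lies in M(G) and is a two-sided inverse for *: x * x⁻¹ = 1 = x⁻¹ * x. -/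
/-! The inverse of `P(g)` is `P(σ g)`, so `M(G)` is closed under inversion. The triality
identity `x · ρ(x) · ρ²(x) = 1` says `x⁻¹ = ρ(x) · ρ²(x)`, which is exactly `x * x⁻¹ = 1`;
applied to `x⁻¹ ∈ M(G)` the same identity gives `x⁻¹ * x = 1`. -/

section

variable {G : Type*} [Group G]

theorem inv_trialityP {σ : G →* G} (hσ : ∀ g, σ (σ g) = g) (g : G) :
    (trialityP σ g)⁻¹ = trialityP σ (σ g) := by
  simp [trialityP, hσ g]

theorem trialityMul_self_inv (ρ : G →* G) {x : G} (h : x * ρ x * ρ (ρ x) = 1) :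
    trialityMul ρ x x⁻¹ = 1 := by
  have hx : x⁻¹ = ρ x * ρ (ρ x) := inv_eq_of_mul_eq_one_right (by rw [← mul_assoc, h])
  rw [trialityMul, hx]
  group

end

theorem trialityM_inv_general {G : Type*} [Group G] (σ ρ : G →* G)
    (hσ : ∀ g, σ (σ g) = g)
    (htri : ∀ g, trialityP σ g * ρ (trialityP σ g) * ρ (ρ (trialityP σ g)) = 1) :
    ∀ x ∈ trialityM σ,
      x⁻¹ ∈ trialityM σ ∧ trialityMul ρ x x⁻¹ = 1 ∧ trialityMul ρ x⁻¹ x = 1 := by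
  rintro _ ⟨g, rfl⟩
  have hinv_self : trialityMul ρ (trialityP σ (σ g)) (trialityP σ (σ g))⁻¹ = 1 :=
    trialityMul_self_inv ρ (htri (σ g))
  rw [← inv_trialityP hσ, inv_inv] at hinv_self
  exact ⟨⟨σ g, (inv_trialityP hσ g).symm⟩, trialityMul_self_inv ρ (htri g), hinv_self⟩

/-- In a group with triality `(G, σ, ρ)`, for every `x ∈ M(G)` the group inverse `x⁻¹`
also lies in `M(G)` and is a two-sided inverse for the product
`x * y = ρ(x)⁻¹ y ρ²(x)⁻¹`. -/
theorem trialityM_inv {G : Type*} [Group G] (σ ρ : G →* G)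
    (hσ : ∀ g, σ (σ g) = g) (hρ : ∀ g, ρ (ρ (ρ g)) = g)
    (hσρ : ∀ g, σ (ρ (σ g)) = ρ (ρ g))
    (htri : ∀ g, trialityP σ g * ρ (trialityP σ g) * ρ (ρ (trialityP σ g)) = 1) :
    ∀ x ∈ trialityM σ,
      x⁻¹ ∈ trialityM σ ∧ trialityMul ρ x x⁻¹ = 1 ∧ trialityMul ρ x⁻¹ x = 1 :=
  trialityM_inv_general σ ρ hσ htri
end
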